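/- arXiv:math/0409373 — 2 statements merged into one kernel-verified Lean document; each statement's English description precedes it below -/
import Mathlib

section
/- Let h ∈ ℂ[[z]] have a simple zero at z = 0 and let g ∈ ℂ((z)). If (dg/dz)·h + (1/2)·g·(dh/dz) ∈ ℂ[[z]], then g ∈ ℂ[[z]]. -/
open PowerSeries

noncomputable section

/-- `K = ℂ((z))`, the field of formal Laurent series. -/
abbrev K : Type := LaurentSeries ℂ

/-- The formal derivative `d/dz` on Laurent series. -/
def lD (f : K) : K where
  coeff n := ((n : ℂ) + 1) * f.coeff (n + 1)
  isPWO_support' := by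
    apply Set.IsPWO.mono ((f.isPWO_support).image_of_monotone
      (f := fun m : ℤ => m - 1) (fun a b hab => by simpa using hab))
    intro n hn
    refine ⟨n + 1, ?_, by ring⟩
    intro h0
    apply hn
    simp [h0]

/-- `ℂ[[z]]` viewed as a subring of `ℂ((z))`. -/
def Oz : Subring K := (HahnSeries.ofPowerSeries ℤ ℂ).range

/-- `h ∈ ℂ[[z]]` has a simple zero at `z = 0`. -/
def SimpleZero (h : PowerSeries ℂ) : Prop :=
  PowerSeries.coeff 0 h = 0 ∧ PowerSeries.coeff 1 h ≠ 0

/-! If `g` has order `n < 0`, then `dg/dz` starts at `z^(n-1)` with coefficient `n g_n` and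
`h` starts at `z` with coefficient `h_1`, so the coefficient of `z^n` in
`(dg/dz)·h + (1/2)·g·(dh/dz)` is `(n + 1/2) g_n h_1`. It is nonzero because `n + 1/2` is never
zero for an integer `n`, so the expression would have a pole. -/

open HahnSeries

theorem HahnSeries.coeff_mul_add_of_forall_lt {Γ R : Type*} [AddCommMonoid Γ] [LinearOrder Γ]
    [IsOrderedCancelAddMonoid Γ] [NonUnitalNonAssocSemiring R] {x y : HahnSeries Γ R} {a b : Γ}
    (hx : ∀ i < a, x.coeff i = 0) (hy : ∀ j < b, y.coeff j = 0) :
    (x * y).coeff (a + b) = x.coeff a * y.coeff b := by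
  rw [coeff_mul, Finset.sum_eq_single (a, b)]
  · rintro ⟨i, j⟩ hij hne
    obtain ⟨hi, hj, hsum⟩ := Finset.mem_antidiagonal.mp hij
    have hai : a ≤ i := not_lt.mp fun h => hi (hx i h)
    have hbj : b ≤ j := not_lt.mp fun h => hj (hy j h)
    obtain rfl : i = a :=
      hai.antisymm' (not_lt.mp fun h => (add_lt_add_of_lt_of_le h hbj).ne' hsum)
    obtain rfl : j = b := add_left_cancel hsum
    exact absurd rfl hne
  · intro hab
    by_contra hne
    exact hab (Finset.mem_antidiagonal.mpr
      ⟨left_ne_zero_of_mul hne, right_ne_zero_of_mul hne, rfl⟩)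

theorem mem_Oz_iff {f : K} : f ∈ Oz ↔ ∀ m < 0, f.coeff m = 0 := by
  constructor
  · rintro ⟨p, rfl⟩ m hm
    rw [PowerSeries.coeff_coe, if_pos hm]
  · intro hf
    by_cases hf0 : f = 0
    · exact hf0 ▸ Oz.zero_mem
    have hord : 0 ≤ f.order := not_lt.mp fun h => hf0 (coeff_order_eq_zero.mp (hf _ h))
    exact ⟨_, LaurentSeries.X_order_mul_powerSeriesPart (Int.toNat_of_nonneg hord)⟩

@[simp]
theorem lD_coeff (f : K) (m : ℤ) : (lD f).coeff m = ((m : ℂ) + 1) * f.coeff (m + 1) := rfl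

theorem lD_coeff_sub_one (f : K) (n : ℤ) : (lD f).coeff (n - 1) = n * f.coeff n := by
  simp

theorem lD_coeff_eq_zero_of_forall_lt {f : K} {n : ℤ} (hf : ∀ m < n, f.coeff m = 0) :
    ∀ m < n - 1, (lD f).coeff m = 0 := by
  intro m hm
  rw [lD_coeff, hf _ (by omega), mul_zero]

theorem coeff_lD_mul_add_half_mul_lD {g H : K} {n : ℤ} (hg : ∀ m < n, g.coeff m = 0)
    (hH : ∀ m < 1, H.coeff m = 0) :
    (lD g * H + (1 / 2 : K) * g * lD H).coeff n = (n + 1 / 2) * g.coeff n * H.coeff 1 := by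
  have hgH := coeff_mul_add_of_forall_lt (lD_coeff_eq_zero_of_forall_lt hg) hH
  rw [sub_add_cancel, lD_coeff_sub_one] at hgH
  have hgDH := coeff_mul_add_of_forall_lt (b := 0) hg
    fun m hm => lD_coeff_eq_zero_of_forall_lt hH m (by omega)
  rw [add_zero, lD_coeff, zero_add, Int.cast_zero, zero_add, one_mul] at hgDH
  have half : (1 / 2 : K) = HahnSeries.C (1 / 2 : ℂ) := by
    rw [map_div₀, map_one, map_ofNat]
  rw [coeff_add, hgH, mul_assoc (1 / 2 : K), half, HahnSeries.C_apply, coeff_single_zero_mul,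
    hgDH]
  ring

theorem intCast_add_half_ne_zero (n : ℤ) : (n + 1 / 2 : ℂ) ≠ 0 := by
  intro h
  have : ((2 * n + 1 : ℤ) : ℂ) = 0 := by
    push_cast
    linear_combination 2 * h
  have := Int.cast_eq_zero.mp this
  omega

/-- If `h ∈ ℂ[[z]]` has a simple zero at `z = 0`, `g ∈ ℂ((z))`, and
`(dg/dz)·h + (1/2)·g·(dh/dz) ∈ ℂ[[z]]`, then `g ∈ ℂ[[z]]`. -/
theorem stmt3 (h : PowerSeries ℂ) (hsz : SimpleZero h) (g : K)
    (hreg : lD g * (HahnSeries.ofPowerSeries ℤ ℂ h) +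
      (1 / 2 : K) * g * lD (HahnSeries.ofPowerSeries ℤ ℂ h) ∈ Oz) :
    g ∈ Oz := by
  obtain ⟨h0, h1⟩ := hsz
  set H : K := ofPowerSeries ℤ ℂ h
  have hH : ∀ m < 1, H.coeff m = 0 := by
    intro m hm
    rw [PowerSeries.coeff_coe]
    split_ifs
    · rfl
    · rwa [show m.natAbs = 0 by omega]
  have hH1 : H.coeff 1 = coeff 1 h := PowerSeries.coeff_coe h 1
  rw [mem_Oz_iff] at hreg ⊢
  by_contra! ⟨m, hm, hgm⟩
  have hg0 : g ≠ 0 := ne_zero_of_coeff_ne_zero hgm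
  have hord : g.order < 0 := (order_le_of_coeff_ne_zero hgm).trans_lt hm
  have key := coeff_lD_mul_add_half_mul_lD (g := g) (fun _ => coeff_eq_zero_of_lt_order) hH
  rw [hreg _ hord, hH1] at key
  have hgn : g.coeff g.order ≠ 0 := mt coeff_order_eq_zero.mp hg0
  exact mul_ne_zero (mul_ne_zero (intCast_add_half_ne_zero _) hgn) h1 key.symm

end
end

section
/- Let A = Σᵢ Aᵢ(z)λⁱ ∈ M₂(ℂ((z))[[λ]]) be such that every coefficient Aᵢ is a diagonal matrix, and let R ∈ M₂(ℂ((z))[[λ]]) be invertible over ℂ((z))[[λ]] with R(z,0) ∈ M₂(ℂ[[z]]) and det R(z,0) ∈ ℂ[[z]] having a simple zero at z = 0. If Gauge_λ(A,R) = R⁻¹AR + λR⁻¹(dR/dz) ∈ M₂(ℂ[[z,λ]]), then res_{z=0} tr A = −λ; that is, the λ⁰-coefficient of tr A has residue 0, the λ¹-coefficient has residue −1, and all higher λ-coefficients have residue 0. -/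
open PowerSeries

noncomputable section

/-- `K̂ = ℂ((z))[[λ]]`, formal power series in `λ` with Laurent series coefficients. -/
abbrev Khat : Type := PowerSeries K

/-- The `λ`-coefficientwise formal derivative `d/dz` on `ℂ((z))[[λ]]`. -/
def pD (F : Khat) : Khat := PowerSeries.mk fun i => lD (PowerSeries.coeff i F)

/-- `F ∈ ℂ[[z,λ]]`: every `λ`-coefficient of `F` lies in `ℂ[[z]]`. -/
def MemOhat (F : Khat) : Prop := ∀ i, PowerSeries.coeff i F ∈ Oz

/-- The `λ`-gauge transform `Gauge_λ(A,R) = R⁻¹AR + λ·R⁻¹·(dR/dz)`. -/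
def lamGauge (A R : Matrix (Fin 2) (Fin 2) Khat) : Matrix (Fin 2) (Fin 2) Khat :=
  R⁻¹ * A * R + (PowerSeries.X : Khat) • (R⁻¹ * R.map pD)

/-- The constant term in `λ`: `F(z,0)`. -/
def ev0 : Khat →+* K := PowerSeries.constantCoeff

/-- The residue of a Laurent series: the coefficient of `z⁻¹`. -/
def res (f : K) : ℂ := f.coeff (-1)

/-- The residue of an element of `ℂ((z))[[λ]]`, an element of `ℂ[[λ]]`. -/
def resHat (F : Khat) : PowerSeries ℂ := PowerSeries.mk fun i => res (PowerSeries.coeff i F)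


/-!
Taking traces, `tr Gauge_λ(A,R) = tr A + λ · (det R)⁻¹ · d(det R)/dz`, by invariance of the trace
under conjugation and Jacobi's formula; the left side has residue `0` because its entries lie in
`ℂ[[z,λ]]`. Write `det R = c · v` with `c = det R(z,0) ∈ ℂ((z))` and `v ≡ 1 mod λ`. Then the
logarithmic derivative of `det R` is `c'/c + v'/v`, where `res (c'/c) = ord c = 1`, while every
`λ`-coefficient of `v'/v` is the `z`-derivative of the corresponding coefficient of `log v`, so
has residue `0`.
-/

namespace Derivation

variable {R A : Type*} [CommSemiring R] [CommRing A] [Algebra R A] (D : Derivation R A A)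

lemma map_mul_mul_of_mul_eq_one {a a' b b' : A} (ha : a * a' = 1) (hb : b * b' = 1) :
    D (a * b) * (a' * b') = D a * a' + D b * b' := by
  rw [leibniz, smul_eq_mul, smul_eq_mul]
  linear_combination (D b * b') * ha + (D a * a') * hb

lemma trace_adjugate_mul_map_fin_two (M : Matrix (Fin 2) (Fin 2) A) :
    (M.adjugate * M.map D).trace = D M.det := by
  rw [Matrix.trace_fin_two, Matrix.adjugate_fin_two, Matrix.det_fin_two]
  simp [Matrix.mul_apply, Fin.sum_univ_two, leibniz]
  ring

def powerSeriesMapCoeffs : Derivation R A⟦X⟧ A⟦X⟧ :=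
  Derivation.mk'
    { toFun := fun F => PowerSeries.mk fun i => D (coeff i F)
      map_add' := fun F G => by ext; simp
      map_smul' := fun r F => by ext; simp }
    fun F G => by
      rw [smul_eq_mul, smul_eq_mul, mul_comm G]
      ext i
      simp only [LinearMap.coe_mk, AddHom.coe_mk, coeff_mk, map_add, coeff_mul, map_sum, leibniz,
        smul_eq_mul, Finset.sum_add_distrib, mul_comm (coeff _ G)]

@[simp]
lemma coeff_powerSeriesMapCoeffs (F : A⟦X⟧) (i : ℕ) :
    coeff i (D.powerSeriesMapCoeffs F) = D (coeff i F) := by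
  simp [powerSeriesMapCoeffs]

lemma powerSeriesMapCoeffs_C (a : A) : D.powerSeriesMapCoeffs (C a) = C (D a) := by
  ext i
  rw [coeff_powerSeriesMapCoeffs, coeff_C, coeff_C]
  split_ifs <;> simp

end Derivation

section LogPartialSum

variable {𝕜 A : Type*} [Field 𝕜] [CharZero 𝕜] [CommRing A] [Algebra 𝕜 A]

variable (𝕜) in
def logPartialSum (u : A) (m : ℕ) : A :=
  ∑ n ∈ Finset.range m, ((-1) ^ n / (n + 1) : 𝕜) • u ^ (n + 1)

namespace Derivation

variable (D : Derivation 𝕜 A A)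

lemma map_logPartialSum (u : A) (m : ℕ) :
    D (logPartialSum 𝕜 u m) = (∑ n ∈ Finset.range m, (-u) ^ n) * D u := by
  simp only [logPartialSum, map_sum, map_smul, leibniz_pow, Finset.sum_mul]
  refine Finset.sum_congr rfl fun n _ => ?_
  rw [Nat.add_sub_cancel, ← Nat.cast_smul_eq_nsmul 𝕜, smul_smul, Nat.cast_add_one,
    div_mul_cancel₀ _ (Nat.cast_add_one_ne_zero n), smul_eq_mul, Algebra.smul_def, neg_pow u,
    mul_assoc]
  simp

lemma map_logPartialSum_mul_one_add (u : A) (m : ℕ) :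
    D (logPartialSum 𝕜 u m) * (1 + u) = (1 - (-u) ^ m) * D u := by
  rw [map_logPartialSum, ← mul_neg_geom_sum, sub_neg_eq_add]
  ring

/-- The `i`-th coefficient of `v'/v` is that of `(log v)'`, and `log v` agrees up to order `i` with
a polynomial in `v - 1`. -/
lemma coeff_powerSeriesMapCoeffs_mul_mem_range {v w : A⟦X⟧}
    (hv : constantCoeff v = 1) (hvw : v * w = 1) (i : ℕ) :
    coeff i (D.powerSeriesMapCoeffs v * w) ∈ Set.range D := by
  set D' := D.powerSeriesMapCoeffs
  set u := v - 1
  set S := logPartialSum 𝕜 u (i + 1)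
  have hu : D' u = D' v := by rw [map_sub, map_one_eq_zero, sub_zero]
  have hS : D' S = D' v * w - (-u) ^ (i + 1) * (D' v * w) := by
    calc D' S = D' S * (1 + u) * w := by rw [add_sub_cancel, mul_assoc, hvw, mul_one]
      _ = _ := by rw [map_logPartialSum_mul_one_add, hu]; ring
  have hdvd : X ^ (i + 1) ∣ (-u) ^ (i + 1) * (D' v * w) :=
    (pow_dvd_pow_of_dvd (X_dvd_iff.mpr (by simp [u, hv])) _).mul_right _
  refine ⟨coeff i S, ?_⟩
  rw [← coeff_powerSeriesMapCoeffs, hS, map_sub, X_pow_dvd_iff.mp hdvd i (by omega), sub_zero]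

end Derivation

end LogPartialSum

section LaurentSeries

open HahnSeries

-- `HahnSeries.powerSeriesAlgebra` makes `ℂ((z))` a `ℚ`-algebra whose action is not definitionally
-- the coefficientwise `HahnSeries.instModule`; `Derivation ℚ K K` needs the two to agree.
attribute [-instance] HahnSeries.powerSeriesAlgebra

lemma coeff_lD (f : K) (n : ℤ) : (lD f).coeff n = ((n : ℂ) + 1) * f.coeff (n + 1) := rfl

lemma lD_add (f g : K) : lD (f + g) = lD f + lD g := by
  ext n
  simp only [coeff_lD, coeff_add]
  ring

lemma lD_single_mul (m : ℤ) (c : ℂ) (f : K) :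
    lD (single m c * f) = single (m - 1) ((m : ℂ) * c) * f + single m c * lD f := by
  ext n
  simp only [coeff_add, coeff_lD, coeff_single_mul, show n + 1 - m = n - (m - 1) by ring,
    show n - m + 1 = n - (m - 1) by ring]
  push_cast
  ring

lemma lD_ofPowerSeries (F : PowerSeries ℂ) :
    lD (ofPowerSeries ℤ ℂ F) = ofPowerSeries ℤ ℂ (d⁄dX ℂ F) := by
  ext n
  rw [coeff_lD]
  rcases lt_or_ge n 0 with hn | hn
  · rw [PowerSeries.coeff_coe, PowerSeries.coeff_coe, if_pos hn]
    rcases lt_or_eq_of_le (Int.add_one_le_iff.mpr hn) with h | h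
    · rw [if_pos h, mul_zero]
    · simp [show n = -1 by omega]
  · lift n to ℕ using hn
    rw [show (n : ℤ) + 1 = ((n + 1 : ℕ) : ℤ) by push_cast; ring,
      LaurentSeries.coeff_coe_powerSeries, LaurentSeries.coeff_coe_powerSeries, coeff_derivative]
    push_cast
    ring

lemma lD_mul (f g : K) : lD (f * g) = lD f * g + f * lD g := by
  obtain ⟨a, F, rfl⟩ : ∃ a F, f = single a 1 * ofPowerSeries ℤ ℂ F :=
    ⟨_, _, f.single_order_mul_powerSeriesPart.symm⟩
  obtain ⟨b, G, rfl⟩ : ∃ b G, g = single b 1 * ofPowerSeries ℤ ℂ G :=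
    ⟨_, _, g.single_order_mul_powerSeriesPart.symm⟩
  have hmul : (single (a + b) (1 : ℂ) : K) = single a 1 * single b 1 := by
    rw [single_mul_single, mul_one]
  have hderiv : (single (a + b - 1) (((a + b : ℤ) : ℂ) * 1) : K) =
      single (a - 1) ((a : ℂ) * 1) * single b 1 + single a 1 * single (b - 1) ((b : ℂ) * 1) := by
    rw [single_mul_single, single_mul_single, show a - 1 + b = a + b - 1 by ring,
      show a + (b - 1) = a + b - 1 by ring, ← single_add]
    push_cast
    ring_nf
  rw [mul_mul_mul_comm, ← hmul, ← map_mul, lD_single_mul, hderiv, hmul, lD_ofPowerSeries,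
    Derivation.leibniz, lD_single_mul, lD_single_mul, lD_ofPowerSeries, lD_ofPowerSeries]
  simp only [smul_eq_mul, map_add, map_mul]
  ring

def lDerivation : Derivation ℚ K K :=
  Derivation.mk'
    { toFun := lD
      map_add' := lD_add
      map_smul' q f := by ext n; simp [coeff_lD] }
    fun f g => by
      rw [LinearMap.coe_mk, AddHom.coe_mk, lD_mul, smul_eq_mul, smul_eq_mul, add_comm, mul_comm g]

@[simp]
lemma coe_lDerivation : ⇑lDerivation = lD := rfl

lemma coe_powerSeriesMapCoeffs_lDerivation : ⇑lDerivation.powerSeriesMapCoeffs = pD := by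
  ext F i
  simp [pD]

lemma res_add (f g : K) : res (f + g) = res f + res g := rfl

lemma res_single_neg_one (c : ℂ) : res (single (-1) c) = c := coeff_single_same _ _

lemma res_ofPowerSeries (F : PowerSeries ℂ) : res (ofPowerSeries ℤ ℂ F) = 0 := by
  rw [res, PowerSeries.coeff_coe, if_pos (by norm_num)]

lemma res_lD (f : K) : res (lD f) = 0 := by
  simp [res, lD]

lemma res_lD_mul_inv {f : K} (hf : f ≠ 0) : res (lD f * f⁻¹) = f.order := by
  have hF : constantCoeff f.powerSeriesPart ≠ 0 := by
    simpa [← coeff_zero_eq_constantCoeff_apply] using coeff_order_eq_zero.not.mpr hf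
  have hf_eq := f.single_order_mul_powerSeriesPart
  generalize f.order = a, f.powerSeriesPart = F at hF hf_eq
  subst hf_eq
  have hinv : (single a 1 * ofPowerSeries ℤ ℂ F)⁻¹ = single (-a) 1 * ofPowerSeries ℤ ℂ F⁻¹ := by
    refine inv_eq_of_mul_eq_one_right ?_
    rw [mul_mul_mul_comm, single_mul_single, ← map_mul, PowerSeries.mul_inv_cancel F hF]
    simp
  rw [hinv, lD_single_mul, lD_ofPowerSeries, add_mul]
  simp only [mul_mul_mul_comm _ (ofPowerSeries ℤ ℂ _) (single (-a) (1 : ℂ)), single_mul_single,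
    ← map_mul, PowerSeries.mul_inv_cancel F hF, map_one, mul_one]
  rw [show a - 1 + -a = -1 by ring, add_neg_cancel, single_zero_one, one_mul, res_add,
    res_single_neg_one, res_ofPowerSeries, add_zero]

lemma order_ofPowerSeries_of_simpleZero {h : PowerSeries ℂ} (hh : SimpleZero h) :
    (ofPowerSeries ℤ ℂ h).order = 1 := by
  have h1 : (ofPowerSeries ℤ ℂ h).coeff 1 ≠ 0 := by
    simpa [PowerSeries.coeff_coe] using hh.2
  refine le_antisymm (order_le_of_coeff_ne_zero h1) ?_
  by_contra! hlt
  refine coeff_order_eq_zero.not.mpr (ne_zero_of_coeff_ne_zero h1) ?_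
  rw [PowerSeries.coeff_coe]
  split_ifs with hneg
  · rfl
  · rw [show (ofPowerSeries ℤ ℂ h).order = 0 by omega]
    exact hh.1

lemma coeff_resHat (F : Khat) (i : ℕ) : coeff i (resHat F) = res (coeff i F) :=
  coeff_mk _ _

lemma resHat_add (F G : Khat) : resHat (F + G) = resHat F + resHat G := by
  ext i
  simp only [coeff_resHat, map_add, res_add]

lemma resHat_C (f : K) : resHat (PowerSeries.C f) = PowerSeries.C (res f) := by
  ext i
  rw [coeff_resHat, coeff_C, coeff_C]
  split_ifs <;> rfl

lemma resHat_X_mul (F : Khat) : resHat (X * F) = X * resHat F := by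
  ext (_ | i) <;> simp [coeff_resHat, res]

lemma resHat_eq_zero_of_memOhat {F : Khat} (hF : MemOhat F) : resHat F = 0 := by
  ext i
  obtain ⟨G, hG⟩ := hF i
  rw [coeff_resHat, ← hG, res_ofPowerSeries, map_zero]

lemma resHat_pD_mul_eq_C_order {d w : Khat} (hdw : d * w = 1) :
    resHat (pD d * w) = PowerSeries.C ((ev0 d).order : ℂ) := by
  set f := ev0 d
  have hf : f ≠ 0 := left_ne_zero_of_mul_eq_one (b := ev0 w) (by rw [← map_mul, hdw, map_one])
  set v := PowerSeries.C f⁻¹ * d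
  have hv : constantCoeff v = 1 := by
    rw [map_mul, constantCoeff_C]
    exact inv_mul_cancel₀ hf
  have hd : d = PowerSeries.C f * v := by
    rw [← mul_assoc, ← map_mul, mul_inv_cancel₀ hf, map_one, one_mul]
  have hw : w = PowerSeries.C f⁻¹ * (PowerSeries.C f * w) := by
    rw [← mul_assoc, ← map_mul, inv_mul_cancel₀ hf, map_one, one_mul]
  have hvw : v * (PowerSeries.C f * w) = 1 := by
    rw [mul_mul_mul_comm, ← map_mul, inv_mul_cancel₀ hf, map_one, one_mul, hdw]
  have hv_log : resHat (pD v * (PowerSeries.C f * w)) = 0 := by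
    ext i
    obtain ⟨g, hg⟩ := lDerivation.coeff_powerSeriesMapCoeffs_mul_mem_range hv hvw i
    rw [coeff_resHat, ← coe_powerSeriesMapCoeffs_lDerivation, ← hg, coe_lDerivation, res_lD,
      map_zero]
  rw [hd, hw, ← coe_powerSeriesMapCoeffs_lDerivation,
    Derivation.map_mul_mul_of_mul_eq_one _ (by rw [← map_mul, mul_inv_cancel₀ hf, map_one]) hvw,
    Derivation.powerSeriesMapCoeffs_C, ← map_mul, resHat_add, resHat_C, coe_lDerivation,
    res_lD_mul_inv hf, coe_powerSeriesMapCoeffs_lDerivation, hv_log, add_zero]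

lemma trace_lamGauge (A R : Matrix (Fin 2) (Fin 2) Khat) (hR : IsUnit R.det) :
    (lamGauge A R).trace = A.trace + X * (pD R.det * Ring.inverse R.det) := by
  have hconj : (R⁻¹ * A * R).trace = A.trace := by
    rw [Matrix.trace_mul_comm _ R, ← Matrix.mul_assoc, Matrix.mul_nonsing_inv R hR,
      Matrix.one_mul]
  have hjacobi : (R⁻¹ * R.map pD).trace = pD R.det * Ring.inverse R.det := by
    rw [Matrix.inv_def, Matrix.smul_mul (Ring.inverse R.det) R.adjugate, Matrix.trace_smul,
      ← coe_powerSeriesMapCoeffs_lDerivation, Derivation.trace_adjugate_mul_map_fin_two,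
      smul_eq_mul, mul_comm]
  rw [lamGauge, Matrix.trace_add, Matrix.trace_smul, smul_eq_mul, hconj, hjacobi]

end LaurentSeries

theorem stmt15_general (A : Matrix (Fin 2) (Fin 2) Khat)
    (R : Matrix (Fin 2) (Fin 2) Khat) (hR : IsUnit R)
    (hdet : ∃ h : PowerSeries ℂ, (R.map ev0).det = HahnSeries.ofPowerSeries ℤ ℂ h ∧
      SimpleZero h)
    (hgauge : ∀ i j, MemOhat (lamGauge A R i j)) :
    resHat A.trace = -PowerSeries.X := by
  obtain ⟨h, hh, hs⟩ := hdet
  have hRdet : IsUnit R.det := (Matrix.isUnit_iff_isUnit_det R).mp hR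
  have hres_gauge : resHat (lamGauge A R).trace = 0 := by
    rw [Matrix.trace_fin_two, resHat_add, resHat_eq_zero_of_memOhat (hgauge 0 0),
      resHat_eq_zero_of_memOhat (hgauge 1 1), add_zero]
  have hres_log : resHat (pD R.det * Ring.inverse R.det) = 1 := by
    rw [resHat_pD_mul_eq_C_order (Ring.mul_inverse_cancel _ hRdet), RingHom.map_det,
      RingHom.mapMatrix_apply, hh, order_ofPowerSeries_of_simpleZero hs, Int.cast_one, map_one]
  have htrace := congrArg resHat (trace_lamGauge A R hRdet)
  rw [hres_gauge, resHat_add, resHat_X_mul, hres_log, mul_one] at htrace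
  exact eq_neg_of_add_eq_zero_left htrace.symm

/-- Suppose `A ∈ M₂(ℂ((z))[[λ]])` is diagonal and `R ∈ M₂(ℂ((z))[[λ]])`
is invertible with `R(z,0) ∈ M₂(ℂ[[z]])` and `det R(z,0)` having a simple zero at `z = 0`.
If `Gauge_λ(A,R) ∈ M₂(ℂ[[z,λ]])`, then `res tr A = -λ`. -/
theorem stmt15 (A : Matrix (Fin 2) (Fin 2) Khat)
    (hdiag : ∀ i j, i ≠ j → A i j = 0)
    (R : Matrix (Fin 2) (Fin 2) Khat) (hR : IsUnit R)
    (hR0 : ∀ i j, (R.map ev0) i j ∈ Oz)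
    (hdet : ∃ h : PowerSeries ℂ, (R.map ev0).det = HahnSeries.ofPowerSeries ℤ ℂ h ∧
      SimpleZero h)
    (hgauge : ∀ i j, MemOhat (lamGauge A R i j)) :
    resHat A.trace = -PowerSeries.X :=
  stmt15_general A R hR hdet hgauge

end
end
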